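/- Let λ be real and let the degenerate Euler–Seidel matrix be defined by a_{n,0}(λ) = a_n and a_{n,k}(λ) = (1-(k-n)λ) a_{n,k-1}(λ) + a_{n+1,k-1}(λ) for n ≥ 0, k ≥ 1. Then for all n ≥ 0, a_{0,n}(λ) = ∑_{k=0}^{n} C(n,k) (1-λ)_{n-k,λ} a_{k,0}(λ). -/

import Mathlib

open Finset

/-- Generalized falling factorial `(x)_{n,lam} = x(x-lam)...(x-(n-1)lam)`. -/
noncomputable def dfall (lam x : ℝ) (n : ℕ) : ℝ := ∏ i ∈ Finset.range n, (x - i * lam)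

/-- Generalized rising factorial `⟨x⟩_{n,lam} = x(x+lam)...(x+(n-1)lam)`. -/
noncomputable def drise (lam x : ℝ) (n : ℕ) : ℝ := ∏ i ∈ Finset.range n, (x + i * lam)



lemma dfall_succ (lam x : ℝ) (n : ℕ) : dfall lam x (n+1) = dfall lam x n * (x - n * lam) := by
  simp [dfall, Finset.prod_range_succ]

lemma dfall_shift (lam x : ℝ) (n : ℕ) :
    dfall lam (x + lam) (n+1) = (x + lam) * dfall lam x n := by
  rw [dfall, Finset.prod_range_succ', mul_comm]
  congr 1
  · norm_num
  · apply Finset.prod_congr rfl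
    intro i _
    push_cast
    ring

lemma key (lam : ℝ) (A : ℕ → ℕ → ℝ)
    (hA : ∀ n k : ℕ, A n (k + 1) = (1 - ((k + 1 : ℝ) - (n : ℝ)) * lam) * A n k + A (n + 1) k)
    (n : ℕ) : ∀ m : ℕ, A m n = ∑ k ∈ Finset.range (n + 1),
      (n.choose k : ℝ) * dfall lam (1 + ((m:ℝ) - 1) * lam) (n - k) * A (m + k) 0 := by
  induction n with
  | zero => intro m; simp [dfall]
  | succ n ih =>
    intro m
    have h1 := hA m n
    rw [ih m, ih (m+1)] at h1
    rw [h1]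
    have e2 : (1 : ℝ) + ((↑(m+1) : ℝ) - 1) * lam = (1 + ((m:ℝ)-1)*lam) + lam := by
      push_cast; ring
    rw [e2]
    rw [Finset.mul_sum]
    rw [Finset.sum_range_succ']
    rw [Finset.sum_range_succ]
    conv_rhs => rw [Finset.sum_range_succ', Finset.sum_range_succ]
    have hmain : ∑ k ∈ Finset.range n,
          (1 - (↑n + 1 - ↑m) * lam) *
            (↑(n.choose (k + 1)) * dfall lam (1 + ((m:ℝ) - 1) * lam) (n - (k + 1)) * A (m + (k + 1)) 0) +
        ∑ k ∈ Finset.range n, ↑(n.choose k) * dfall lam (1 + ((m:ℝ) - 1) * lam + lam) (n - k) * A (m + 1 + k) 0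
        = ∑ k ∈ Finset.range n,
          ↑((n + 1).choose (k + 1)) * dfall lam (1 + ((m:ℝ) - 1) * lam) (n + 1 - (k + 1)) * A (m + (k + 1)) 0 := by
      rw [← Finset.sum_add_distrib]
      apply Finset.sum_congr rfl
      intro k hk
      have hk' : k < n := Finset.mem_range.mp hk
      have hmk : m + 1 + k = m + (k + 1) := by omega
      have h3 : n + 1 - (k + 1) = (n - (k + 1)) + 1 := by omega
      have h4 : n - k = (n - (k + 1)) + 1 := by omega
      rw [hmk, h3, h4, dfall_shift, dfall_succ]
      have hnk : ((n - (k + 1) : ℕ) : ℝ) = (n : ℝ) - (k : ℝ) - 1 := by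
        rw [Nat.cast_sub (by omega)]; push_cast; ring
      rw [hnk]
      have hch : (((n + 1).choose (k + 1) : ℕ) : ℝ) = (n.choose k : ℝ) + (n.choose (k + 1) : ℝ) := by
        rw [Nat.choose_succ_succ]; push_cast; ring
      rw [hch]
      have hid : ((k : ℝ) + 1) * (n.choose (k + 1) : ℝ) = ((n : ℝ) - (k : ℝ)) * (n.choose k : ℝ) := by
        have h := Nat.choose_succ_right_eq n k
        have h2 : ((n.choose (k + 1) * (k + 1) : ℕ) : ℝ) = ((n.choose k * (n - k) : ℕ) : ℝ) :=
          Nat.cast_inj.mpr h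
        rw [Nat.cast_mul, Nat.cast_mul, Nat.cast_sub (le_of_lt hk')] at h2
        push_cast at h2 ⊢
        linarith
      linear_combination (-(dfall lam (1 + ((m:ℝ) - 1) * lam) (n - (k + 1)) * A (m + (k + 1)) 0 * lam)) * hid
    have hb1 : (1 - ((n:ℝ) + 1 - ↑m) * lam) *
          (↑(n.choose 0) * dfall lam (1 + ((m:ℝ) - 1) * lam) (n - 0) * A (m + 0) 0)
        = ↑((n + 1).choose 0) * dfall lam (1 + ((m:ℝ) - 1) * lam) (n + 1 - 0) * A (m + 0) 0 := by
      have : n + 1 - 0 = (n - 0) + 1 := by omega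
      rw [this, dfall_succ]
      have hn0 : ((n - 0 : ℕ) : ℝ) = (n : ℝ) := by norm_num
      rw [hn0]
      simp only [Nat.choose_zero_right, Nat.cast_one]
      ring
    have hb2 : (↑(n.choose n) : ℝ) * dfall lam (1 + ((m:ℝ) - 1) * lam + lam) (n - n) * A (m + 1 + n) 0
        = ↑((n + 1).choose (n + 1)) * dfall lam (1 + ((m:ℝ) - 1) * lam) (n + 1 - (n + 1)) * A (m + (n + 1)) 0 := by
      have h5 : m + 1 + n = m + (n + 1) := by omega
      simp [h5, dfall]
    linarith [hmain, hb1, hb2]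

theorem stmt4 (lam : ℝ) (a : ℕ → ℝ) (A : ℕ → ℕ → ℝ)
    (hA0 : ∀ n : ℕ, A n 0 = a n)
    (hA : ∀ n k : ℕ, A n (k + 1) = (1 - ((k + 1 : ℝ) - (n : ℝ)) * lam) * A n k + A (n + 1) k)
    (n : ℕ) :
    A 0 n = ∑ k ∈ Finset.range (n + 1),
      (n.choose k : ℝ) * dfall lam (1 - lam) (n - k) * A k 0 := by
  rw [key lam A hA n 0]
  apply Finset.sum_congr rfl
  intro k _
  have h : (1 : ℝ) + (((0:ℕ) : ℝ) - 1) * lam = 1 - lam := by push_cast; ring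
  rw [h, Nat.zero_add]
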